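/- arXiv:1307.0127 — 2 statements merged into one kernel-verified Lean document; each statement's English description precedes it below -/
import Mathlib

section
/- There exist a model class M = {μ, ν} over binary alphabet and prior weights (w, 1−w) such that, with μ-probability at least δ, the cumulative KL error satisfies D_∞ > (1/(4 ln 2))·ln(1/δ)·(ln(1/δ) + 2·ln((1−w)/w) − 3·ln 2). -/
open MeasureTheory ENNReal

/-- The cylinder set of a finite string `x`: infinite sequences beginning with `x`. -/
def cyl {A : Type*} (x : List A) : Set (ℕ → A) :=
  {ω | ∀ i : Fin x.length, ω i = x.get i}

/-- `mass μ x` is the `μ`-probability of the cylinder set of `x`. -/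
noncomputable def mass {A : Type*} [MeasurableSpace A] (μ : Measure (ℕ → A)) (x : List A) : ℝ :=
  (μ (cyl x)).toReal

/-- One-step predictive probability `μ(a | x)`. -/
noncomputable def condP {A : Type*} [MeasurableSpace A] (μ : Measure (ℕ → A)) (x : List A)
    (a : A) : ℝ :=
  mass μ (x ++ [a]) / mass μ x

/-- Squared Hellinger distance between the one-step predictive distributions given `x`. -/
noncomputable def hellSq {A : Type*} [MeasurableSpace A] (μ ξ : Measure (ℕ → A))
    (x : List A) : ℝ :=
  ∑' a : A, (Real.sqrt (condP μ x a) - Real.sqrt (condP ξ x a)) ^ 2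

/-- KL divergence between the one-step predictive distributions given `x`. -/
noncomputable def klDiv' {A : Type*} [MeasurableSpace A] (μ ξ : Measure (ℕ → A))
    (x : List A) : ℝ :=
  ∑' a : A, condP μ x a * Real.log (condP μ x a / condP ξ x a)

/-- The prefix `ω_{<t+1}` of length `t` of an infinite sequence. -/
def pre {A : Type*} (ω : ℕ → A) (t : ℕ) : List A := (List.range t).map ω


/-!
Along the all-ones prefix of length `t` the posterior odds of `ν` against `μ` are
`r 2^t` with `r = (1 - w) / w`, so the mixture predicts `false` with probability
`1 / (2 (1 + r 2^t))`, and the `t`-th KL term exceeds `(log r + (t - 1) log 2) / 2`.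
After the first `false` the mixture predicts like `μ` and the KL terms vanish. Hence every
sequence that starts with `n` ones but is not all ones has cumulative KL at least the sum of these
bounds over `t ≤ n`, a quadratic in `n`; with `n = ⌊log (1/δ) / log 2⌋` this quadratic beats the
claimed bound, and the `μ`-mass of these sequences is `2^{-n} ≥ δ`. The all-ones sequence has to be
excluded (it is `μ`-null): along it the KL terms are not summable, so `∑'` returns `0`.
-/

section Cylinders

variable {A : Type*}

@[simp]
lemma length_pre (ω : ℕ → A) (t : ℕ) : (pre ω t).length = t := by simp [pre]

lemma mem_pre {ω : ℕ → A} {t : ℕ} {a : A} : a ∈ pre ω t ↔ ∃ i < t, ω i = a := by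
  simp [pre]

lemma mem_cyl_pre {σ ω : ℕ → A} {t : ℕ} : σ ∈ cyl (pre ω t) ↔ ∀ i < t, σ i = ω i := by
  simp [cyl, pre, Fin.forall_iff]

lemma const_mem_cyl_iff {a : A} {x : List A} : (fun _ => a) ∈ cyl x ↔ ∀ b ∈ x, b = a := by
  simp [cyl, List.forall_mem_iff_getElem, Fin.forall_iff, eq_comm]

lemma cyl_eq_pi (x : List A) :
    cyl x = (Finset.range x.length : Set ℕ).pi fun i => {a | x[i]? = some a} := by
  ext σ
  simp only [cyl, Fin.forall_iff, List.get_eq_getElem, Finset.coe_range, Set.mem_ofPred_eq,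
    Set.mem_pi, Set.mem_Iio, List.getElem?_eq_some_iff]
  exact forall₂_congr fun i hi => ⟨fun h => ⟨hi, h.symm⟩, fun ⟨_, h⟩ => h.symm⟩

lemma MeasureTheory.Measure.infinitePi_cyl [MeasurableSpace A] [MeasurableSingletonClass A]
    (P : ℕ → Measure A) [∀ i, IsProbabilityMeasure (P i)] (x : List A) :
    Measure.infinitePi P (cyl x) = ∏ i : Fin x.length, P i {x.get i} := by
  rw [cyl_eq_pi, Measure.infinitePi_pi _ fun i _ => ?_, ← Fin.prod_univ_eq_prod_range]
  · congr! with i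
    ext a
    simp [eq_comm]
  · exact Set.Subsingleton.measurableSet fun a ha b hb => Option.some_injective _ (ha.symm.trans hb)

end Cylinders

section Mass

variable {A : Type*} [MeasurableSpace A]

lemma mass_add_smul (μ ν : Measure (ℕ → A)) [IsFiniteMeasure μ] [IsFiniteMeasure ν] {a b : ℝ}
    (ha : 0 ≤ a) (hb : 0 ≤ b) (x : List A) :
    mass (ENNReal.ofReal a • μ + ENNReal.ofReal b • ν) x = a * mass μ x + b * mass ν x := by
  simp only [mass, Measure.add_apply, Measure.smul_apply, smul_eq_mul]
  rw [ENNReal.toReal_add (by finiteness) (by finiteness), ENNReal.toReal_mul, ENNReal.toReal_mul,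
    ENNReal.toReal_ofReal ha, ENNReal.toReal_ofReal hb]

lemma mass_dirac_const [MeasurableSingletonClass A] [DecidableEq A] (a : A) (x : List A) :
    mass (Measure.dirac fun _ => a) x = if ∀ b ∈ x, b = a then 1 else 0 := by
  classical
  simp only [mass, Measure.dirac_apply, Set.indicator_apply, const_mem_cyl_iff]
  split_ifs <;> simp

end Mass

noncomputable def bayesMixture {Ω : Type*} [MeasurableSpace Ω] (w : ℝ) (μ ν : Measure Ω) :
    Measure Ω :=
  ENNReal.ofReal w • μ + ENNReal.ofReal (1 - w) • ν

noncomputable def fairCoinKL (q : ℝ) : ℝ :=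
  2⁻¹ * Real.log (2⁻¹ / (1 - q)) + 2⁻¹ * Real.log (2⁻¹ / q)

lemma fairCoinKL_nonneg {q : ℝ} (h0 : 0 < q) (h1 : q < 1) : 0 ≤ fairCoinKL q := by
  have h : 1 ≤ 2⁻¹ / (1 - q) * (2⁻¹ / q) := by
    rw [div_mul_div_comm, le_div_iff₀ (by nlinarith)]
    nlinarith [sq_nonneg (2 * q - 1)]
  have := Real.log_nonneg h
  rw [Real.log_mul (by positivity) (by positivity)] at this
  unfold fairCoinKL
  linarith

lemma half_log_sub_half_log_two_le_fairCoinKL {q : ℝ} (h0 : 0 < q) (h1 : q < 1) :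
    2⁻¹ * Real.log (2⁻¹ / q) - 2⁻¹ * Real.log 2 ≤ fairCoinKL q := by
  have : -Real.log 2 ≤ Real.log (2⁻¹ / (1 - q)) := by
    rw [← Real.log_inv]
    exact Real.log_le_log (by norm_num) (le_div_self (by norm_num) (by linarith) (by linarith))
  unfold fairCoinKL
  linarith

lemma inv_two_mul_mem_Ioo {s : ℝ} (hs : 1 ≤ s) : (2 * s)⁻¹ ∈ Set.Ioo 0 1 :=
  ⟨by positivity, inv_lt_one_of_one_lt₀ (by linarith)⟩

lemma sum_range_half_affine (ρ c : ℝ) (m : ℕ) :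
    ∑ t ∈ Finset.range m, 2⁻¹ * (ρ + ((t : ℝ) - 1) * c) = m / 4 * (2 * ρ + (m - 3) * c) := by
  induction m with
  | zero => simp
  | succ m ih =>
    rw [Finset.sum_range_succ, ih]
    push_cast
    ring

noncomputable def coinFlips : Measure (ℕ → Bool) :=
  Measure.infinitePi fun _ => (PMF.uniformOfFintype Bool).toMeasure

lemma coinFlips_cyl (x : List Bool) : coinFlips (cyl x) = 2⁻¹ ^ x.length := by
  simp [coinFlips, Measure.infinitePi_cyl]

lemma mass_coinFlips (x : List Bool) : mass coinFlips x = 2⁻¹ ^ x.length := by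
  simp [mass, coinFlips_cyl]

lemma condP_coinFlips (x : List Bool) (a : Bool) : condP coinFlips x a = 2⁻¹ := by
  rw [condP, mass_coinFlips, mass_coinFlips, List.length_append, List.length_singleton, pow_succ,
    mul_div_cancel_left₀ _ (by positivity)]

lemma coinFlips_singleton (ω : ℕ → Bool) : coinFlips {ω} = 0 := by
  by_contra h
  obtain ⟨t, ht⟩ := ENNReal.exists_inv_two_pow_lt h
  have hcyl : coinFlips {ω} ≤ coinFlips (cyl (pre ω t)) :=
    measure_mono (Set.singleton_subset_iff.2 (mem_cyl_pre.2 fun _ _ => rfl))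
  rw [coinFlips_cyl, length_pre] at hcyl
  exact ht.not_ge hcyl

instance : IsProbabilityMeasure coinFlips := by
  unfold coinFlips; infer_instance

noncomputable def allOnes : Measure (ℕ → Bool) := Measure.dirac fun _ => true

instance : IsProbabilityMeasure allOnes := by
  unfold allOnes; infer_instance

lemma klDiv'_coinFlips (ξ : Measure (ℕ → Bool)) (x : List Bool) :
    klDiv' coinFlips ξ x =
      2⁻¹ * Real.log (2⁻¹ / condP ξ x true) + 2⁻¹ * Real.log (2⁻¹ / condP ξ x false) := by
  simp [klDiv', condP_coinFlips]

noncomputable def cumulativeKL {A : Type*} [MeasurableSpace A] (μ ξ : Measure (ℕ → A))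
    (ω : ℕ → A) : ℝ :=
  ∑' t, klDiv' μ ξ (pre ω t)

section Mixture

variable {w : ℝ}

lemma mass_bayesMixture (hw0 : 0 ≤ w) (hw1 : w ≤ 1) (x : List Bool) :
    mass (bayesMixture w coinFlips allOnes) x =
      w * 2⁻¹ ^ x.length + (1 - w) * if ∀ b ∈ x, b = true then 1 else 0 := by
  rw [bayesMixture, mass_add_smul _ _ hw0 (by linarith), mass_coinFlips, allOnes,
    mass_dirac_const]
  congr

lemma klDiv'_bayesMixture_of_false_mem (hw0 : 0 < w) (hw1 : w ≤ 1) {x : List Bool}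
    (hx : false ∈ x) : klDiv' coinFlips (bayesMixture w coinFlips allOnes) x = 0 := by
  have hfalse : ∀ y : List Bool, false ∈ y → ¬ ∀ b ∈ y, b = true := fun y hy h => by
    simpa using h false hy
  have hcond (a : Bool) : condP (bayesMixture w coinFlips allOnes) x a = 2⁻¹ := by
    rw [condP, mass_bayesMixture hw0.le hw1, mass_bayesMixture hw0.le hw1,
      if_neg (hfalse _ (List.mem_append_left _ hx)), if_neg (hfalse _ hx)]
    simp only [List.length_append, List.length_singleton, pow_succ]
    field_simp
    ring
  simp [klDiv'_coinFlips, hcond]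

lemma klDiv'_bayesMixture_of_forall_true (hw0 : 0 < w) (hw1 : w ≤ 1) {x : List Bool}
    (hx : ∀ b ∈ x, b = true) :
    klDiv' coinFlips (bayesMixture w coinFlips allOnes) x =
      fairCoinKL (2 * (1 + (1 - w) / w * 2 ^ x.length))⁻¹ := by
  have hx' (a : Bool) : (∀ b ∈ x ++ [a], b = true) ↔ a = true := by
    simp only [List.mem_append, List.mem_singleton, or_imp, forall_and, forall_eq]
    exact and_iff_right hx
  have hmass := mass_bayesMixture hw0.le hw1
  set s : ℝ := 1 + (1 - w) / w * 2 ^ x.length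
  have hs : 0 < s := by have := hw0; positivity
  have hm : w * 2⁻¹ ^ x.length + (1 - w) = w * 2⁻¹ ^ x.length * s := by
    simp only [s, inv_pow]
    field_simp
  have hF : condP (bayesMixture w coinFlips allOnes) x false = (2 * s)⁻¹ := by
    rw [condP, hmass, hmass, if_pos hx, if_neg (by simp), mul_one, mul_zero, add_zero, hm,
      List.length_append, List.length_singleton, pow_succ]
    field_simp
  have hT : condP (bayesMixture w coinFlips allOnes) x true = 1 - (2 * s)⁻¹ := by
    rw [condP, hmass, hmass, if_pos hx, if_pos ((hx' true).2 rfl), mul_one, hm,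
      List.length_append, List.length_singleton, pow_succ]
    field_simp
    linear_combination 2 * hm
  rw [klDiv'_coinFlips, fairCoinKL, hT, hF]

lemma klDiv'_bayesMixture_nonneg (hw0 : 0 < w) (hw1 : w ≤ 1) {x : List Bool}
    (hx : ∀ b ∈ x, b = true) : 0 ≤ klDiv' coinFlips (bayesMixture w coinFlips allOnes) x := by
  have hq := inv_two_mul_mem_Ioo (s := 1 + (1 - w) / w * 2 ^ x.length)
    (le_add_of_nonneg_right (by have := hw0; positivity))
  rw [klDiv'_bayesMixture_of_forall_true hw0 hw1 hx]
  exact fairCoinKL_nonneg hq.1 hq.2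

lemma lt_klDiv'_bayesMixture (hw0 : 0 < w) (hw1 : w < 1) {x : List Bool}
    (hx : ∀ b ∈ x, b = true) :
    2⁻¹ * (Real.log ((1 - w) / w) + (x.length - 1) * Real.log 2) <
      klDiv' coinFlips (bayesMixture w coinFlips allOnes) x := by
  have hr : 0 < (1 - w) / w := div_pos (by linarith) hw0
  set s := 1 + (1 - w) / w * 2 ^ x.length
  have hq := inv_two_mul_mem_Ioo (s := s) (le_add_of_nonneg_right (by positivity))
  have hlog : Real.log ((1 - w) / w) + x.length * Real.log 2 < Real.log s := by
    rw [← Real.log_pow, ← Real.log_mul hr.ne' (by positivity)]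
    exact Real.log_lt_log (by positivity) (lt_one_add _)
  have hs : 2⁻¹ / (2 * s)⁻¹ = s := by field_simp
  rw [klDiv'_bayesMixture_of_forall_true hw0 hw1.le hx]
  have := half_log_sub_half_log_two_le_fairCoinKL hq.1 hq.2
  rw [hs] at this
  linarith

lemma cumulativeKL_eq_sum (hw0 : 0 < w) (hw1 : w ≤ 1) {ω : ℕ → Bool} {k : ℕ}
    (hk : ω k = false) :
    cumulativeKL coinFlips (bayesMixture w coinFlips allOnes) ω =
      ∑ t ∈ Finset.range (k + 1), klDiv' coinFlips (bayesMixture w coinFlips allOnes) (pre ω t) :=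
  tsum_eq_sum fun t ht => klDiv'_bayesMixture_of_false_mem hw0 hw1 <|
    mem_pre.2 ⟨k, by simpa using ht, hk⟩

lemma cumulativeKL_bounds (hw0 : 0 < w) (hw1 : w < 1) {n : ℕ} {ω : ℕ → Bool}
    (hω : ω ∈ cyl (pre (fun _ => true) n) \ {fun _ => true}) :
    0 ≤ cumulativeKL coinFlips (bayesMixture w coinFlips allOnes) ω ∧
      (n + 1) / 4 * (2 * Real.log ((1 - w) / w) + (n - 2) * Real.log 2) <
        cumulativeKL coinFlips (bayesMixture w coinFlips allOnes) ω := by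
  obtain ⟨hpre, hne⟩ := hω
  have hfalse : ∃ k, ω k = false := by
    by_contra! h
    exact hne (funext fun i => Bool.not_eq_false _ |>.mp (h i))
  set k := Nat.find hfalse
  have hk : ω k = false := Nat.find_spec hfalse
  have htrue (i) (hi : i < k) : ω i = true := Bool.not_eq_false _ |>.mp (Nat.find_min hfalse hi)
  have hnk : n ≤ k := by
    by_contra! h
    simpa [hk] using mem_cyl_pre.1 hpre k h
  have hpre_true {t} (ht : t ∈ Finset.range (k + 1)) : ∀ b ∈ pre ω t, b = true := by
    intro b hb
    obtain ⟨i, hi, rfl⟩ := mem_pre.1 hb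
    exact htrue i (by simp at ht; omega)
  rw [cumulativeKL_eq_sum hw0 hw1.le hk]
  set ρ := Real.log ((1 - w) / w)
  have hnonneg := fun t ht => klDiv'_bayesMixture_nonneg hw0 hw1.le (hpre_true (t := t) ht)
  refine ⟨Finset.sum_nonneg hnonneg, ?_⟩
  calc (n + 1) / 4 * (2 * ρ + (n - 2) * Real.log 2)
      = ∑ t ∈ Finset.range (n + 1), 2⁻¹ * (ρ + ((t : ℝ) - 1) * Real.log 2) := by
        rw [sum_range_half_affine]; push_cast; ring
    _ < ∑ t ∈ Finset.range (n + 1), klDiv' coinFlips (bayesMixture w coinFlips allOnes) (pre ω t) :=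
        Finset.sum_lt_sum_of_nonempty Finset.nonempty_range_add_one fun t ht => by
          simpa using lt_klDiv'_bayesMixture hw0 hw1 (hpre_true (by simp at ht ⊢; omega))
    _ ≤ _ := Finset.sum_le_sum_of_subset_of_nonneg (by simpa using hnk) fun t ht _ => hnonneg t ht

end Mixture

lemma ofReal_le_coinFlips_cyl_diff {δ : ℝ} (hδ : 0 < δ) {n : ℕ}
    (hn : n * Real.log 2 ≤ Real.log (1 / δ)) :
    ENNReal.ofReal δ ≤ coinFlips (cyl (pre (fun _ => true) n) \ {fun _ => true}) := by
  rw [measure_sdiff_null (coinFlips_singleton _), coinFlips_cyl, length_pre,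
    ← ENNReal.ofReal_ofNat 2, ← ENNReal.ofReal_inv_of_pos two_pos,
    ← ENNReal.ofReal_pow (by norm_num)]
  refine ENNReal.ofReal_le_ofReal ((Real.log_le_log_iff hδ (by positivity)).1 ?_)
  rw [Real.log_pow, Real.log_inv]
  rw [one_div, Real.log_inv] at hn
  linarith

lemma quadratic_lt_of_lt_add_one_mul {L c ρ n D : ℝ} (hc : 0 < c) (hL : 0 < L)
    (hn : L < (n + 1) * c) (hD0 : 0 ≤ D) (hD : (n + 1) / 4 * (2 * ρ + (n - 2) * c) < D) :
    1 / (4 * c) * L * (L + 2 * ρ - 3 * c) < D := by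
  rcases lt_or_ge (L + 2 * ρ - 3 * c) 0 with hneg | hnonneg
  · have : 1 / (4 * c) * L * (L + 2 * ρ - 3 * c) < 0 :=
      mul_neg_of_pos_of_neg (by positivity) hneg
    linarith
  · refine lt_of_le_of_lt ?_ hD
    rw [show 1 / (4 * c) * L * (L + 2 * ρ - 3 * c) = L / c / 4 * (L + 2 * ρ - 3 * c) by ring]
    have hLc : L / c < n + 1 := (div_lt_iff₀ hc).2 hn
    have hLc0 : 0 < L / c := div_pos hL hc
    gcongr ?_ / 4 * ?_
    · linarith
    · linarith

/-- Lower bound construction: there is a two-element model class `{μ, ν}` over the binary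
alphabet with prior weights `(w, 1-w)` such that with `μ`-probability at least `δ`,
`D_∞ > (1/(4 ln 2)) ln(1/δ) (ln(1/δ) + 2 ln((1-w)/w) - 3 ln 2)`. -/
theorem stmt10 (δ w : ℝ) (hδ : δ ∈ Set.Ioo (0 : ℝ) 1) (hw : w ∈ Set.Ioo (0 : ℝ) 1) :
    ∃ μ ν : Measure (ℕ → Bool), IsProbabilityMeasure μ ∧ IsProbabilityMeasure ν ∧
      ENNReal.ofReal δ ≤
        μ {ω | (1 / (4 * Real.log 2)) * Real.log (1 / δ) *
            (Real.log (1 / δ) + 2 * Real.log ((1 - w) / w) - 3 * Real.log 2) <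
          ∑' t, klDiv' μ (ENNReal.ofReal w • μ + ENNReal.ofReal (1 - w) • ν) (pre ω t)} := by
  obtain ⟨hδ0, hδ1⟩ := hδ
  obtain ⟨hw0, hw1⟩ := hw
  refine ⟨coinFlips, allOnes, inferInstance, inferInstance, ?_⟩
  have hc : 0 < Real.log 2 := Real.log_pos one_lt_two
  have hL : 0 < Real.log (1 / δ) := Real.log_pos (one_lt_one_div hδ0 hδ1)
  set n := ⌊Real.log (1 / δ) / Real.log 2⌋₊
  have hn : n * Real.log 2 ≤ Real.log (1 / δ) :=
    (le_div_iff₀ hc).1 (Nat.floor_le (div_pos hL hc).le)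
  have hn' : Real.log (1 / δ) < (n + 1) * Real.log 2 :=
    (div_lt_iff₀ hc).1 (Nat.lt_floor_add_one _)
  refine (ofReal_le_coinFlips_cyl_diff hδ0 hn).trans (measure_mono fun ω hω => ?_)
  obtain ⟨hD0, hD⟩ := cumulativeKL_bounds hw0 hw1 hω
  exact quadratic_lt_of_lt_add_one_mul hc hL hn' hD0 hD
end

section
/- In the Bayesian setup with countable M, prior w, mixture ξ, true μ ∈ M, and δ ∈ (0,1), define the plausible class M_t := {ν ∈ M : ∀τ ≤ t, ν(ω_{<τ})/ξ(ω_{<τ}) ≥ δ·w_μ/w_ν} and ĥ_t := sup_{ν∈M_t} (w_ν/w_μ)·h_t(ν,ξ). Then with μ-probability at least 1−δ, h_t(μ,ξ) ≤ ĥ_t for all t simultaneously. -/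
open MeasureTheory ENNReal

/-!
On the event that the likelihood ratio `μ(ω_{<t}) / ξ(ω_{<t})` never drops below `δ`, the true
index `i₀` lies in every plausible class, so its own term bounds `h_t(μ,ξ)` inside the supremum
(a supremum over finitely many nonzero terms, since only finitely many weights exceed `δ w_{i₀}`).
That event has probability at least `1 - δ` by Ville's inequality, proved by stopping at the
first time the ratio drops below `δ`: the cylinders at those times are disjoint and each has
`μ ≤ δ ξ`. Cylinders need not be measurable, so they are replaced by their measurable hulls,
products of measurable atoms, which carry the same mass under every measure.
-/

theorem mem_measurableAtom_pi {ι : Type*} {X : ι → Type*} [∀ i, MeasurableSpace (X i)]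
    {x y : ∀ i, X i} (h : ∀ i, y i ∈ measurableAtom (x i)) : y ∈ measurableAtom x := by
  let saturated : MeasurableSpace (∀ i, X i) :=
    { MeasurableSet' := fun s => ∀ x y : ∀ i, X i, (∀ i, y i ∈ measurableAtom (x i)) →
        x ∈ s → y ∈ s
      measurableSet_empty := fun _ _ _ hx => hx
      measurableSet_compl := fun s hs x y hxy hx hy =>
        hx <| hs y x (fun i => (measurableAtom_eq_of_mem (hxy i)) ▸ mem_measurableAtom_self _) hy
      measurableSet_iUnion := fun f hf x y hxy hx => by
        obtain ⟨j, hj⟩ := Set.mem_iUnion.1 hx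
        exact Set.mem_iUnion.2 ⟨j, hf j x y hxy hj⟩ }
  have hpi : MeasurableSpace.pi ≤ saturated := by
    refine iSup_le fun i => ?_
    rintro _ ⟨S, hS, rfl⟩ x y hxy hx
    exact mem_of_mem_measurableAtom (hxy i) hS hx
  simp only [measurableAtom, Set.mem_iInter]
  exact fun s hxs hs => hpi s hs x y h hxs

theorem cyl_pre {A : Type*} (ω : ℕ → A) (t : ℕ) :
    cyl (pre ω t) = {η | ∀ i < t, η i = ω i} := by
  ext η
  simp [cyl, pre, Fin.forall_iff]

section PrefixHull

variable {A : Type*} [MeasurableSpace A]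

def prefixHull (ω : ℕ → A) (t : ℕ) : Set (ℕ → A) :=
  {η | ∀ i < t, η i ∈ measurableAtom (ω i)}

theorem mem_prefixHull_self (ω : ℕ → A) (t : ℕ) : ω ∈ prefixHull ω t :=
  fun i _ => mem_measurableAtom_self (ω i)

theorem measurableSet_prefixHull [Countable A] (ω : ℕ → A) (t : ℕ) :
    MeasurableSet (prefixHull ω t) := by
  simp only [prefixHull, Set.ofPred_forall]
  exact .iInter fun i => .iInter fun _ =>
    measurable_pi_apply i (.measurableAtom_of_countable (ω i))

theorem prefixHull_eq_of_mem {ω η : ℕ → A} {m t : ℕ} (hη : η ∈ prefixHull ω t) (hm : m ≤ t) :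
    prefixHull η m = prefixHull ω m := by
  ext ζ
  refine forall₂_congr fun i hi => ?_
  rw [measurableAtom_eq_of_mem (hη i (hi.trans_le hm))]

theorem countable_range_prefixHull [Countable A] (t : ℕ) :
    (Set.range fun ω : ℕ → A => prefixHull ω t).Countable := by
  refine (Set.countable_range fun x : Fin t → A =>
    {η : ℕ → A | ∀ i : Fin t, η i ∈ measurableAtom (x i)}).mono ?_
  rintro _ ⟨ω, rfl⟩
  exact ⟨fun i => ω i, by ext η; simp [prefixHull, Fin.forall_iff]⟩

theorem measure_cyl_pre (μ : Measure (ℕ → A)) (ω : ℕ → A) (t : ℕ) :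
    μ (cyl (pre ω t)) = μ (prefixHull ω t) := by
  have hsub : cyl (pre ω t) ⊆ prefixHull ω t := by
    intro η hη i hi
    rw [cyl_pre] at hη
    rw [hη i hi]
    exact mem_measurableAtom_self _
  refine le_antisymm (measure_mono hsub) ?_
  rw [measure_eq_iInf (cyl (pre ω t))]
  refine le_iInf₂ fun s hs => le_iInf fun hmeas => measure_mono fun η hη => ?_
  classical
  let ω' : ℕ → A := fun i => if i < t then ω i else η i
  have hω' : ω' ∈ s := hs <| by rw [cyl_pre]; intro i hi; simp [ω', hi]
  refine mem_of_mem_measurableAtom (mem_measurableAtom_pi fun i => ?_) hmeas hω'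
  by_cases hi : i < t
  · simpa [ω', hi] using hη i hi
  · simp [ω', hi]

theorem mass_pre (μ : Measure (ℕ → A)) (ω : ℕ → A) (t : ℕ) :
    mass μ (pre ω t) = (μ (prefixHull ω t)).toReal := by
  rw [mass, measure_cyl_pre]

theorem mass_pre_zero (μ : Measure (ℕ → A)) [IsProbabilityMeasure μ] (ω : ℕ → A) :
    mass μ (pre ω 0) = 1 := by
  simp [mass_pre, prefixHull]

theorem mass_pre_eq_of_mem {ω η : ℕ → A} {m t : ℕ} (hη : η ∈ prefixHull ω t) (hm : m ≤ t)
    (μ : Measure (ℕ → A)) : mass μ (pre η m) = mass μ (pre ω m) := by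
  rw [mass_pre, mass_pre, prefixHull_eq_of_mem hη hm]

end PrefixHull

theorem measure_le_ofReal_mul_of_toReal_div_lt {α : Type*} [MeasurableSpace α]
    {μ ξ : Measure α} [IsFiniteMeasure μ] [IsFiniteMeasure ξ] (hμξ : μ ≪ ξ) {s : Set α} {δ : ℝ}
    (hδ : 0 ≤ δ) (hs : (μ s).toReal / (ξ s).toReal < δ) : μ s ≤ ENNReal.ofReal δ * ξ s := by
  rcases eq_or_ne (ξ s) 0 with h0 | h0
  · simp [h0, hμξ h0]
  · have hlt : (μ s).toReal < δ * (ξ s).toReal :=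
      (div_lt_iff₀ (ENNReal.toReal_pos h0 (measure_ne_top ξ s))).1 hs
    rw [← ENNReal.ofReal_toReal (measure_ne_top μ s),
      ← ENNReal.ofReal_toReal (measure_ne_top ξ s), ← ENNReal.ofReal_mul hδ]
    exact ENNReal.ofReal_le_ofReal hlt.le

theorem measure_le_mul_measure_univ_of_blocks {α : Type*} [MeasurableSpace α]
    {μ ξ : Measure α} {E : Set α} {c : ℝ≥0∞} (block : α → Set α)
    (hmem : ∀ x ∈ E, x ∈ block x) (hmeas : ∀ x ∈ E, MeasurableSet (block x))
    (hblock : ∀ x ∈ E, ∀ y ∈ block x, block y = block x) (hcount : (block '' E).Countable)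
    (hle : ∀ x ∈ E, μ (block x) ≤ c * ξ (block x)) : μ E ≤ c * ξ Set.univ := by
  have hdisj : (block '' E).Pairwise Disjoint := by
    rintro _ ⟨x, hx, rfl⟩ _ ⟨y, hy, rfl⟩ hne
    refine Set.disjoint_left.2 fun z hzx hzy => hne ?_
    rw [← hblock x hx z hzx, hblock y hy z hzy]
  have hcover : E ⊆ ⋃₀ (block '' E) := fun x hx => ⟨block x, ⟨x, hx, rfl⟩, hmem x hx⟩
  have := hcount.to_subtype
  calc μ E ≤ ∑' s : block '' E, μ s := by
        rw [Set.sUnion_eq_iUnion] at hcover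
        exact (measure_mono hcover).trans (measure_iUnion_le _)
    _ ≤ ∑' s : block '' E, c * ξ s := by
        exact ENNReal.tsum_le_tsum fun ⟨_, x, hx, rfl⟩ => hle x hx
    _ = c * ξ (⋃₀ (block '' E)) := by
        rw [ENNReal.tsum_mul_left, measure_sUnion hcount hdisj]
        rintro _ ⟨x, hx, rfl⟩
        exact hmeas x hx
    _ ≤ c * ξ Set.univ := by gcongr; exact Set.subset_univ _

theorem ville_inequality {A : Type*} [MeasurableSpace A] [Countable A] {μ ξ : Measure (ℕ → A)}
    [IsFiniteMeasure μ] [IsFiniteMeasure ξ] (hμξ : μ ≪ ξ) {δ : ℝ} (hδ : 0 ≤ δ) :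
    μ {ω | ∃ t, mass μ (pre ω t) / mass ξ (pre ω t) < δ} ≤ ENNReal.ofReal δ * ξ Set.univ := by
  set bad : (ℕ → A) → ℕ → Prop := fun ω t => mass μ (pre ω t) / mass ξ (pre ω t) < δ
  let τ : (ℕ → A) → ℕ := fun ω => sInf {t | bad ω t}
  have bad_iff {ω η : ℕ → A} {t : ℕ} (hη : η ∈ prefixHull ω t) {m : ℕ} (hm : m ≤ t) :
      bad η m ↔ bad ω m := by
    simp only [bad, mass_pre_eq_of_mem hη hm]
  have τ_eq {ω : ℕ → A} (hω : ∃ t, bad ω t) {η : ℕ → A} (hη : η ∈ prefixHull ω (τ ω)) :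
      τ η = τ ω := by
    have hητ : bad η (τ ω) := (bad_iff hη le_rfl).2 (Nat.sInf_mem hω)
    refine le_antisymm (Nat.sInf_le hητ) (not_lt.1 fun hlt => ?_)
    have hη_bad : bad η (τ η) := Nat.sInf_mem (s := {t | bad η t}) ⟨_, hητ⟩
    exact Nat.notMem_of_lt_sInf hlt ((bad_iff hη hlt.le).1 hη_bad)
  refine measure_le_mul_measure_univ_of_blocks (fun ω => prefixHull ω (τ ω))
    (fun ω _ => mem_prefixHull_self ω _) (fun ω _ => measurableSet_prefixHull ω _)
    (fun ω hω η hη => ?_) ?_ (fun ω hω => ?_)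
  · rw [τ_eq hω hη]
    exact prefixHull_eq_of_mem hη le_rfl
  · refine (Set.countable_iUnion countable_range_prefixHull).mono ?_
    rintro _ ⟨ω, -, rfl⟩
    exact Set.mem_iUnion.2 ⟨τ ω, ω, rfl⟩
  · refine measure_le_ofReal_mul_of_toReal_div_lt hμξ hδ ?_
    rw [← mass_pre, ← mass_pre]
    exact Nat.sInf_mem hω

theorem one_sub_ofReal_le_measure_forall_le_mass_div {A : Type*} [MeasurableSpace A]
    [Countable A] {μ ξ : Measure (ℕ → A)} [IsProbabilityMeasure μ] [IsProbabilityMeasure ξ]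
    (hμξ : μ ≪ ξ) {δ : ℝ} (hδ : 0 ≤ δ) :
    1 - ENNReal.ofReal δ ≤ μ {ω | ∀ t, δ ≤ mass μ (pre ω t) / mass ξ (pre ω t)} := by
  set G := {ω | ∀ t, δ ≤ mass μ (pre ω t) / mass ξ (pre ω t)}
  have hGc : Gᶜ = {ω | ∃ t, mass μ (pre ω t) / mass ξ (pre ω t) < δ} := by
    ext ω
    simp [G]
  refine tsub_le_iff_right.2 ?_
  calc 1 = μ Set.univ := measure_univ.symm
    _ ≤ μ G + μ Gᶜ := measure_univ_le_add_compl G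
    _ ≤ μ G + ENNReal.ofReal δ := by
      rw [hGc]
      simpa using add_le_add_left (ville_inequality hμξ hδ) (μ G)

theorem isProbabilityMeasure_sum_ofReal_smul {ι α : Type*} [MeasurableSpace α]
    {ν : ι → Measure α} [∀ i, IsProbabilityMeasure (ν i)] {w : ι → ℝ} (hw : ∀ i, 0 ≤ w i)
    (hw1 : HasSum w 1) :
    IsProbabilityMeasure (Measure.sum fun i => ENNReal.ofReal (w i) • ν i) := by
  constructor
  simp [← ENNReal.ofReal_tsum_of_nonneg hw hw1.summable, hw1.tsum_eq]

theorem Summable.finite_setOf_le {ι : Type*} {f : ι → ℝ} (hf : Summable f) {ε : ℝ}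
    (hε : 0 < ε) : {i | ε ≤ f i}.Finite := by
  simpa using Filter.eventually_cofinite.1 (hf.tendsto_cofinite_zero.eventually (gt_mem_nhds hε))

theorem bddAbove_range_of_le_off_finite {ι : Type*} {g : ι → ℝ} {s : Set ι} (hs : s.Finite)
    {c : ℝ} (hg : ∀ i ∉ s, g i ≤ c) : BddAbove (Set.range g) := by
  obtain ⟨b, hb⟩ := (hs.image g).bddAbove
  refine ⟨max b c, ?_⟩
  rintro _ ⟨i, rfl⟩
  by_cases hi : i ∈ s
  · exact (hb ⟨i, hi, rfl⟩).trans (le_max_left b c)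
  · exact (hg i hi).trans (le_max_right b c)

open Classical in
theorem stmt17_general {A ι : Type*} [MeasurableSpace A] [Countable A]
    (ν : ι → Measure (ℕ → A)) (hν : ∀ i, IsProbabilityMeasure (ν i))
    (w : ι → ℝ) (hw : ∀ i, 0 < w i) (hwsum : ∑' i, w i = 1)
    (ξ : Measure (ℕ → A)) (hξ : ξ = Measure.sum (fun i => ENNReal.ofReal (w i) • ν i))
    (i₀ : ι) (δ : ℝ) (hδ : δ ∈ Set.Ioo (0 : ℝ) 1) :
    1 - ENNReal.ofReal δ ≤
      ν i₀ {ω | ∀ t, hellSq (ν i₀) ξ (pre ω t) ≤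
        ⨆ i, if (∀ m ≤ t, δ * w i₀ / w i ≤ mass (ν i) (pre ω m) / mass ξ (pre ω m))
          then (w i / w i₀) * hellSq (ν i) ξ (pre ω t) else 0} := by
  have hw1 : HasSum w 1 := by
    refine hwsum ▸ (Summable.hasSum ?_)
    by_contra h
    simp [tsum_eq_zero_of_not_summable h] at hwsum
  have : IsProbabilityMeasure ξ :=
    hξ ▸ isProbabilityMeasure_sum_ofReal_smul (fun i => (hw i).le) hw1
  have hac : ν i₀ ≪ ξ := hξ ▸ (Measure.absolutelyContinuous_smul
    (ENNReal.ofReal_pos.2 (hw i₀)).ne').trans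
      (Measure.absolutelyContinuous_of_le (Measure.le_sum _ i₀))
  refine (one_sub_ofReal_le_measure_forall_le_mass_div hac hδ.1.le).trans
    (measure_mono fun ω hω t => le_ciSup_of_le ?_ i₀ ?_)
  · refine bddAbove_range_of_le_off_finite (hw1.summable.finite_setOf_le (mul_pos hδ.1 (hw i₀)))
      fun i hi => (if_neg fun hplaus => hi ?_).le
    simpa [mass_pre_zero, div_le_one (hw i)] using hplaus 0 t.zero_le
  · rw [if_pos fun m _ => by simpa [(hw i₀).ne'] using hω m, div_self (hw i₀).ne', one_mul]

open Classical in
/-- With `μ`-probability at least `1-δ`, simultaneously for all `t`, the predictive squared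
Hellinger error `h_t(μ,ξ)` is bounded by
`ĥ_t = sup_{ν ∈ M_t} (w_ν/w_μ)·h_t(ν,ξ)`, the sup being over the plausible class
`M_t = {ν : ∀ τ ≤ t, ν(ω_{<τ})/ξ(ω_{<τ}) ≥ δ·w_μ/w_ν}`. -/
theorem stmt17 {A ι : Type*} [MeasurableSpace A] [Countable A] [Countable ι]
    (ν : ι → Measure (ℕ → A)) (hν : ∀ i, IsProbabilityMeasure (ν i))
    (w : ι → ℝ) (hw : ∀ i, 0 < w i) (hwsum : ∑' i, w i = 1)
    (ξ : Measure (ℕ → A)) (hξ : ξ = Measure.sum (fun i => ENNReal.ofReal (w i) • ν i))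
    (i₀ : ι) (δ : ℝ) (hδ : δ ∈ Set.Ioo (0 : ℝ) 1) :
    1 - ENNReal.ofReal δ ≤
      ν i₀ {ω | ∀ t, hellSq (ν i₀) ξ (pre ω t) ≤
        ⨆ i, if (∀ m ≤ t, δ * w i₀ / w i ≤ mass (ν i) (pre ω m) / mass ξ (pre ω m))
          then (w i / w i₀) * hellSq (ν i) ξ (pre ω t) else 0} :=
  stmt17_general ν hν w hw hwsum ξ hξ i₀ δ hδ
end
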